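/- Let n ≥ 1 and let (z,t) ∈ ℂⁿ×ℝ with z ≠ 0. Then both of the following integrals converge absolutely and ∫₀^∞ h^{−1/2} p_h(z,t) dh = (Γ(n+1/2)/(4π^{n+1})) · ∫_ℝ (λ/sinh λ)^n · (λ‖z‖² coth λ − iλt)^{−(n+1/2)} dλ, where the complex power is the principal branch (the base has positive real part for λ ≠ 0 and equals ‖z‖² > 0 in the limit λ → 0, with (λ/sinh λ)^n and λ coth λ extended by 1 at λ = 0). -/

import Mathlib

open MeasureTheory Topology Filter Set

noncomputable section

/-- `λ coth λ`, extended by `1` at `λ = 0`. -/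
def lcoth (l : ℝ) : ℝ := if l = 0 then 1 else l * Real.cosh l / Real.sinh l

/-- `λ / sinh λ`, extended by `1` at `λ = 0`. -/
def lsinh (l : ℝ) : ℝ := if l = 0 then 1 else l / Real.sinh l

/-- `‖z‖²` for `z ∈ ℂⁿ`. -/
def cnorm2 {n : ℕ} (z : Fin n → ℂ) : ℝ := ∑ i, Complex.normSq (z i)

/-- The Gaveau heat kernel on the Heisenberg group `ℍⁿ`:
`p_h(z,t) = (2(4πh)^{n+1})⁻¹ ∫_ℝ exp((λ/(4h))(it − ‖z‖² coth λ)) (λ/sinh λ)^n dλ`. -/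
def pheat (n : ℕ) (h : ℝ) (z : Fin n → ℂ) (t : ℝ) : ℂ :=
  ((2 * (4 * Real.pi * h) ^ (n + 1) : ℝ) : ℂ)⁻¹ *
    ∫ l : ℝ, Complex.exp (((4 * h : ℝ) : ℂ)⁻¹ *
        (Complex.I * l * t - ((cnorm2 z * lcoth l : ℝ) : ℂ))) * ((lsinh l : ℝ) : ℂ) ^ n

/-
Write `A(λ) = ‖z‖² λ coth λ − iλt`, so that `Re A(λ) ≥ ‖z‖² > 0`. The substitution `u = 1/(4h)`
turns the `h`-integral of `h^{-n-3/2} exp(-A(λ)/(4h))` into a Gamma integral, equal to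
`4^{n+1/2} Γ(n+1/2) A(λ)^{-(n+1/2)}`; for complex `A` with positive real part this follows from
the real case by analytic continuation in `A`. The double integral over `(h, λ)` converges
absolutely, its integrand being dominated by `h^{-n-3/2} exp(-‖z‖²/(4h)) (λ / sinh λ)ⁿ`, a product
of integrable functions when `n ≥ 1` (as `λ / sinh λ ≤ 6 / (1 + λ²)`); Fubini's theorem then
exchanges the two integrations.
-/

namespace Real

lemma sinh_le_mul_cosh {x : ℝ} (hx : 0 ≤ x) : sinh x ≤ x * cosh x := by
  rcases hx.eq_or_lt with rfl | hx
  · simp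
  obtain ⟨y, hy, hslope⟩ := exists_hasDerivAt_eq_slope sinh cosh hx
    continuous_sinh.continuousOn (fun y _ => hasDerivAt_sinh y)
  rw [sinh_zero, sub_zero, sub_zero, eq_div_iff hx.ne'] at hslope
  rw [← hslope, mul_comm]
  gcongr
  exact cosh_le_cosh.2 (by rw [abs_of_pos hy.1, abs_of_pos hx]; exact hy.2.le)

lemma self_add_pow_three_div_six_le_sinh {x : ℝ} (hx : 0 ≤ x) : x + x ^ 3 / 6 ≤ sinh x := by
  have := sum_le_hasSum (Finset.range 2) (fun i _ => by positivity) (hasSum_sinh x)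
  norm_num [Finset.sum_range_succ, Nat.factorial] at this
  linarith

end Real

lemma lcoth_neg (l : ℝ) : lcoth (-l) = lcoth l := by
  simp only [lcoth, neg_eq_zero, Real.cosh_neg, Real.sinh_neg, neg_mul, neg_div_neg_eq]

lemma lsinh_neg (l : ℝ) : lsinh (-l) = lsinh l := by
  simp only [lsinh, neg_eq_zero, Real.sinh_neg, neg_div_neg_eq]

lemma lcoth_abs (l : ℝ) : lcoth |l| = lcoth l := by
  rcases abs_choice l with h | h <;> rw [h]; exact lcoth_neg l

lemma lsinh_abs (l : ℝ) : lsinh |l| = lsinh l := by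
  rcases abs_choice l with h | h <;> rw [h]; exact lsinh_neg l

lemma one_le_lcoth (l : ℝ) : 1 ≤ lcoth l := by
  rw [← lcoth_abs, lcoth]
  split_ifs with h
  · rfl
  · have hl : 0 < |l| := abs_pos.2 (by simpa using h)
    rw [le_div_iff₀ (Real.sinh_pos_iff.2 hl), one_mul]
    exact Real.sinh_le_mul_cosh hl.le

lemma lsinh_nonneg (l : ℝ) : 0 ≤ lsinh l := by
  rw [← lsinh_abs, lsinh]
  split_ifs
  · exact zero_le_one
  · exact div_nonneg (abs_nonneg l) (Real.sinh_nonneg_iff.2 (abs_nonneg l))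

lemma lsinh_le_one (l : ℝ) : lsinh l ≤ 1 := by
  rw [← lsinh_abs, lsinh]
  split_ifs with h
  · rfl
  · have hl : 0 < |l| := abs_pos.2 (by simpa using h)
    rw [div_le_one (Real.sinh_pos_iff.2 hl)]
    exact Real.self_le_sinh_iff.2 hl.le

lemma lsinh_le_inv_one_add_sq (l : ℝ) : lsinh l ≤ 6 * (1 + l ^ 2)⁻¹ := by
  rw [← lsinh_abs, ← sq_abs l, lsinh]
  split_ifs with h
  · simp [h]
  · have hl : 0 < |l| := abs_pos.2 (by simpa using h)
    have := Real.self_add_pow_three_div_six_le_sinh hl.le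
    rw [div_le_iff₀ (Real.sinh_pos_iff.2 hl), ← div_eq_mul_inv, div_mul_eq_mul_div,
      le_div_iff₀ (by positivity)]
    nlinarith [pow_pos hl 3]

@[fun_prop]
lemma measurable_lcoth : Measurable lcoth :=
  Measurable.ite (measurableSet_singleton 0) measurable_const (by fun_prop)

@[fun_prop]
lemma measurable_lsinh : Measurable lsinh :=
  Measurable.ite (measurableSet_singleton 0) measurable_const (by fun_prop)

lemma integrable_lsinh_pow {n : ℕ} (hn : n ≠ 0) : Integrable (fun l => lsinh l ^ n) := by
  refine (integrable_inv_one_add_sq.const_mul 6).mono' (by fun_prop) (ae_of_all _ fun l => ?_)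
  rw [Real.norm_of_nonneg (pow_nonneg (lsinh_nonneg l) n)]
  calc lsinh l ^ n ≤ lsinh l := pow_le_of_le_one (lsinh_nonneg l) (lsinh_le_one l) hn
    _ ≤ 6 * (1 + l ^ 2)⁻¹ := lsinh_le_inv_one_add_sq l

lemma norm_cexp_neg_mul_ofReal_le {A B : ℂ} {x : ℝ} (hx : 0 ≤ x) (hAB : B.re ≤ A.re) :
    ‖Complex.exp (-(A * x))‖ ≤ ‖Complex.exp (-(B * x))‖ := by
  simp only [Complex.norm_exp, Complex.neg_re, Complex.re_mul_ofReal]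
  gcongr

lemma integrableOn_rpow_mul_cexp_neg_mul {s : ℝ} (hs : 0 < s) {B : ℂ} (hB : 0 < B.re) :
    IntegrableOn (fun t : ℝ => ((t ^ (s - 1) : ℝ) : ℂ) * Complex.exp (-(B * t))) (Ioi 0) := by
  have hreal : IntegrableOn (fun t : ℝ => t ^ (s - 1) * Real.exp (-B.re * t)) (Ioi 0) := by
    simpa using integrableOn_rpow_mul_exp_neg_mul_rpow (by linarith : -1 < s - 1) zero_lt_one hB
  refine hreal.mono' (by fun_prop)
    ((ae_restrict_iff' measurableSet_Ioi).2 (ae_of_all _ fun t ht => ?_))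
  rw [norm_mul, Complex.norm_real, Real.norm_of_nonneg (Real.rpow_nonneg (le_of_lt ht) _),
    Complex.norm_exp]
  simp

lemma differentiableOn_integral_rpow_mul_cexp_neg_mul {s : ℝ} (hs : 0 < s) :
    DifferentiableOn ℂ
      (fun B : ℂ => ∫ t in Ioi (0 : ℝ), ((t ^ (s - 1) : ℝ) : ℂ) * Complex.exp (-(B * t)))
      {B | 0 < B.re} := by
  intro B (hB : 0 < B.re)
  refine DifferentiableAt.differentiableWithinAt ?_
  have hε : 0 < B.re / 2 := half_pos hB
  have hball : ∀ w ∈ Metric.ball B (B.re / 2), B.re / 2 ≤ w.re := fun w hw => by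
    have := (abs_le.1 ((Complex.abs_re_le_norm (w - B)).trans (mem_ball_iff_norm.1 hw).le)).1
    rw [Complex.sub_re] at this
    linarith
  refine (hasDerivAt_integral_of_dominated_loc_of_deriv_le
    (F := fun w t => ((t ^ (s - 1) : ℝ) : ℂ) * Complex.exp (-(w * t)))
    (F' := fun w t => ((t ^ (s - 1) : ℝ) : ℂ) * (Complex.exp (-(w * t)) * (-(t : ℂ))))
    (bound := fun t : ℝ => t ^ s * Real.exp (-(B.re / 2) * t)) (Metric.ball_mem_nhds B hε)
    (Eventually.of_forall fun w => by fun_prop) (integrableOn_rpow_mul_cexp_neg_mul hs hB)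
    (by fun_prop) ?_ ?_ ?_).2.differentiableAt
  · refine (ae_restrict_iff' measurableSet_Ioi).2 (ae_of_all _ fun t (ht : 0 < t) w hw => ?_)
    rw [norm_mul, norm_mul, Complex.norm_real, Complex.norm_exp, norm_neg, Complex.norm_real,
      Real.norm_of_nonneg (Real.rpow_nonneg ht.le _), Real.norm_of_nonneg ht.le]
    simp only [Complex.neg_re, Complex.re_mul_ofReal]
    have hts : t ^ s = t ^ (s - 1) * t := by rw [← Real.rpow_add_one ht.ne', sub_add_cancel]
    rw [hts, mul_assoc, mul_comm (Real.exp _) t]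
    gcongr
    nlinarith [hball w hw]
  · have h := integrableOn_rpow_mul_exp_neg_mul_rpow (by linarith : -1 < s) zero_lt_one hε
    simp only [Real.rpow_one] at h
    exact h
  · exact ae_of_all _ fun t w _ => ((hasDerivAt_mul_const (t : ℂ)).neg.cexp).const_mul _

lemma integral_rpow_mul_cexp_neg_mul {s : ℝ} (hs : 0 < s) {B : ℂ} (hB : 0 < B.re) :
    ∫ t in Ioi (0 : ℝ), ((t ^ (s - 1) : ℝ) : ℂ) * Complex.exp (-(B * t)) =
      Complex.Gamma s * B ^ (-(s : ℂ)) := by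
  have hU : IsPreconnected {w : ℂ | 0 < w.re} := (convex_halfSpace_re_gt 0).isPreconnected
  have hopen : IsOpen {w : ℂ | 0 < w.re} := isOpen_lt continuous_const Complex.continuous_re
  have hG : DifferentiableOn ℂ (fun w : ℂ => Complex.Gamma s * w ^ (-(s : ℂ))) {w | 0 < w.re} :=
    fun w hw => ((differentiableAt_id.cpow_const (Or.inl hw)).const_mul _).differentiableWithinAt
  have hreal : ∀ᶠ x : ℝ in 𝓝[≠] 1,
      ∫ t in Ioi (0 : ℝ), ((t ^ (s - 1) : ℝ) : ℂ) * Complex.exp (-((x : ℂ) * t)) =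
        Complex.Gamma s * (x : ℂ) ^ (-(s : ℂ)) := by
    filter_upwards [eventually_nhdsWithin_of_eventually_nhds (lt_mem_nhds one_pos)] with x hx
    calc _ = ∫ t in Ioi (0 : ℝ), (t : ℂ) ^ ((s : ℂ) - 1) * Complex.exp (-((x : ℂ) * t)) :=
          setIntegral_congr_fun measurableSet_Ioi fun t ht => by
            rw [Complex.ofReal_cpow (le_of_lt ht)]; push_cast; rfl
      _ = (1 / x) ^ (s : ℂ) * Complex.Gamma s :=
          Complex.integral_cpow_mul_exp_neg_mul_Ioi (by simpa using hs) hx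
      _ = _ := by
          rw [one_div, Complex.inv_cpow_ofReal_nonneg hx.le, ← Complex.cpow_neg, mul_comm]
  have hmaps : Tendsto ((↑) : ℝ → ℂ) (𝓝[≠] 1) (𝓝[≠] 1) :=
    Complex.continuous_ofReal.continuousWithinAt.tendsto_nhdsWithin
      fun x hx => by simpa using hx
  exact ((differentiableOn_integral_rpow_mul_cexp_neg_mul hs).analyticOnNhd hopen)
    |>.eqOn_of_preconnected_of_frequently_eq (hG.analyticOnNhd hopen) hU (by simp)
      (hmaps.frequently hreal.frequently) hB

lemma eqOn_rpow_mul_cexp_neg_mul_comp_inv (s : ℝ) (B : ℂ) :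
    EqOn (fun x : ℝ => (|(-1 : ℝ)| * x ^ ((-1 : ℝ) - 1)) •
        (((x ^ (-1 : ℝ)) ^ (s - 1) : ℝ) * Complex.exp (-(B * (x ^ (-1 : ℝ) : ℝ)))))
      (fun x : ℝ => ((x ^ (-s - 1) : ℝ) : ℂ) * Complex.exp (-(B * (x⁻¹ : ℝ)))) (Ioi 0) := by
  intro x (hx : 0 < x)
  dsimp only
  rw [Real.rpow_neg_one, Complex.real_smul, ← mul_assoc, ← Complex.ofReal_mul, abs_neg, abs_one,
    one_mul, Real.inv_rpow hx.le, ← Real.rpow_neg hx.le, ← Real.rpow_add hx]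
  ring_nf

lemma integrableOn_rpow_mul_cexp_neg_mul_inv {s : ℝ} (hs : 0 < s) {B : ℂ} (hB : 0 < B.re) :
    IntegrableOn (fun x : ℝ => ((x ^ (-s - 1) : ℝ) : ℂ) * Complex.exp (-(B * (x⁻¹ : ℝ))))
      (Ioi 0) :=
  ((integrableOn_Ioi_comp_rpow_iff _ (by norm_num : (-1 : ℝ) ≠ 0)).2
    (integrableOn_rpow_mul_cexp_neg_mul hs hB)).congr_fun
    (eqOn_rpow_mul_cexp_neg_mul_comp_inv s B) measurableSet_Ioi

lemma integral_rpow_mul_cexp_neg_mul_inv {s : ℝ} (hs : 0 < s) {B : ℂ} (hB : 0 < B.re) :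
    ∫ x in Ioi (0 : ℝ), ((x ^ (-s - 1) : ℝ) : ℂ) * Complex.exp (-(B * (x⁻¹ : ℝ))) =
      Complex.Gamma s * B ^ (-(s : ℂ)) := by
  rw [← setIntegral_congr_fun measurableSet_Ioi (eqOn_rpow_mul_cexp_neg_mul_comp_inv s B),
    integral_comp_rpow_Ioi (fun y : ℝ => ((y ^ (s - 1) : ℝ) : ℂ) * Complex.exp (-(B * y)))
      (by norm_num : (-1 : ℝ) ≠ 0), integral_rpow_mul_cexp_neg_mul hs hB]

lemma eqOn_rpow_mul_cexp_neg_mul_inv_mul (s : ℝ) (B : ℂ) {a : ℝ} (ha : 0 < a) :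
    EqOn (fun h : ℝ => ((h ^ (-s - 1) : ℝ) : ℂ) * Complex.exp (-(B * ((a * h)⁻¹ : ℝ))))
      (fun h : ℝ => a ^ (s + 1) •
        (((a * h) ^ (-s - 1) : ℝ) * Complex.exp (-(B * ((a * h)⁻¹ : ℝ))))) (Ioi 0) := by
  intro h (hh : 0 < h)
  dsimp only
  rw [Complex.real_smul, ← mul_assoc, ← Complex.ofReal_mul, Real.mul_rpow ha.le hh.le,
    ← mul_assoc, ← Real.rpow_add ha]
  simp

lemma integrableOn_rpow_mul_cexp_neg_mul_inv_mul {s : ℝ} (hs : 0 < s) {B : ℂ} (hB : 0 < B.re)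
    {a : ℝ} (ha : 0 < a) :
    IntegrableOn (fun h : ℝ => ((h ^ (-s - 1) : ℝ) : ℂ) * Complex.exp (-(B * ((a * h)⁻¹ : ℝ))))
      (Ioi 0) := by
  refine IntegrableOn.congr_fun (Integrable.smul (a ^ (s + 1)) ?_)
    (eqOn_rpow_mul_cexp_neg_mul_inv_mul s B ha).symm measurableSet_Ioi
  refine (integrableOn_Ioi_comp_mul_left_iff
    (fun x : ℝ => ((x ^ (-s - 1) : ℝ) : ℂ) * Complex.exp (-(B * (x⁻¹ : ℝ)))) 0 ha).2 ?_
  simpa using integrableOn_rpow_mul_cexp_neg_mul_inv hs hB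

lemma integral_rpow_mul_cexp_neg_mul_inv_mul {s : ℝ} (hs : 0 < s) {B : ℂ} (hB : 0 < B.re)
    {a : ℝ} (ha : 0 < a) :
    ∫ h in Ioi (0 : ℝ), ((h ^ (-s - 1) : ℝ) : ℂ) * Complex.exp (-(B * ((a * h)⁻¹ : ℝ))) =
      ((a ^ s : ℝ) : ℂ) * Complex.Gamma s * B ^ (-(s : ℂ)) := by
  rw [setIntegral_congr_fun measurableSet_Ioi (eqOn_rpow_mul_cexp_neg_mul_inv_mul s B ha),
    integral_smul, integral_comp_mul_left_Ioi
      (fun x : ℝ => ((x ^ (-s - 1) : ℝ) : ℂ) * Complex.exp (-(B * (x⁻¹ : ℝ)))) 0 ha, mul_zero,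
    integral_rpow_mul_cexp_neg_mul_inv hs hB, smul_smul, Complex.real_smul, ← mul_assoc,
    ← div_eq_mul_inv, ← Real.rpow_sub_one ha.ne', add_sub_cancel_right]

lemma cnorm2_pos {n : ℕ} {z : Fin n → ℂ} (hz : z ≠ 0) : 0 < cnorm2 z := by
  obtain ⟨i, hi⟩ := Function.ne_iff.1 hz
  exact Finset.sum_pos' (fun j _ => Complex.normSq_nonneg _)
    ⟨i, Finset.mem_univ i, Complex.normSq_pos.2 hi⟩

-- `c` stands for `‖z‖²`.
def gaveauBase (c t l : ℝ) : ℂ := ((c * lcoth l : ℝ) : ℂ) - Complex.I * l * t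

lemma le_re_gaveauBase {c : ℝ} (hc : 0 ≤ c) (t l : ℝ) : c ≤ (gaveauBase c t l).re := by
  simpa [gaveauBase] using mul_le_mul_of_nonneg_left (one_le_lcoth l) hc

@[fun_prop]
lemma measurable_gaveauBase (c t : ℝ) : Measurable (gaveauBase c t) := by
  unfold gaveauBase; fun_prop

def gaveauIntegrand (n : ℕ) (c t h l : ℝ) : ℂ :=
  ((h ^ (-((n : ℝ) + 1 / 2) - 1) : ℝ) : ℂ) *
    Complex.exp (-(gaveauBase c t l * ((4 * h)⁻¹ : ℝ))) * ((lsinh l : ℝ) : ℂ) ^ n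

lemma rpow_neg_half_mul_pheat (n : ℕ) (z : Fin n → ℂ) (t : ℝ) {h : ℝ} (hh : 0 < h) :
    ((h ^ (-(1 : ℝ) / 2) : ℝ) : ℂ) * pheat n h z t =
      (((2 * (4 * Real.pi) ^ (n + 1))⁻¹ : ℝ) : ℂ) * ∫ l, gaveauIntegrand n (cnorm2 z) t h l := by
  have hpow : h ^ (-(1 : ℝ) / 2) * (2 * (4 * Real.pi * h) ^ (n + 1))⁻¹ =
      (2 * (4 * Real.pi) ^ (n + 1))⁻¹ * h ^ (-((n : ℝ) + 1 / 2) - 1) := by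
    rw [show -((n : ℝ) + 1 / 2) - 1 = -(1 : ℝ) / 2 - (n + 1 : ℕ) by push_cast; ring,
      Real.rpow_sub hh, Real.rpow_natCast, mul_pow]
    field_simp
  simp_rw [pheat, gaveauIntegrand, mul_assoc, integral_const_mul, ← mul_assoc,
    ← Complex.ofReal_inv, ← Complex.ofReal_mul, hpow, gaveauBase]
  congr 3
  ext l
  push_cast
  ring_nf

lemma integral_Ioi_gaveauIntegrand (n : ℕ) {c : ℝ} (hc : 0 < c) (t l : ℝ) :
    ∫ h in Ioi 0, gaveauIntegrand n c t h l =
      (((4 : ℝ) ^ ((n : ℝ) + 1 / 2) : ℝ) : ℂ) * Complex.Gamma ((n : ℂ) + 1 / 2) *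
        (((lsinh l : ℝ) : ℂ) ^ n * gaveauBase c t l ^ (-(n : ℂ) - 1 / 2)) := by
  simp_rw [gaveauIntegrand, integral_mul_const]
  rw [integral_rpow_mul_cexp_neg_mul_inv_mul (by positivity)
    (hc.trans_le (le_re_gaveauBase hc.le t l)) four_pos]
  push_cast
  ring_nf

lemma integrable_gaveauIntegrand {n : ℕ} (hn : n ≠ 0) {c : ℝ} (hc : 0 < c) (t : ℝ) :
    Integrable (Function.uncurry (gaveauIntegrand n c t))
      ((volume.restrict (Ioi 0)).prod volume) := by
  have hdom := (integrableOn_rpow_mul_cexp_neg_mul_inv_mul (s := (n : ℝ) + 1 / 2)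
    (by positivity) (show 0 < (c : ℂ).re by simpa using hc) four_pos).norm.mul_prod
    (integrable_lsinh_pow hn)
  rw [Measure.restrict_prod_eq_prod_univ] at hdom ⊢
  refine hdom.mono' (by unfold gaveauIntegrand; fun_prop)
    (ae_restrict_of_forall_mem (measurableSet_Ioi.prod .univ) fun ⟨h, l⟩ ⟨(hh : 0 < h), _⟩ => ?_)
  simp only [Function.uncurry_apply_pair, gaveauIntegrand, norm_mul, norm_pow, Complex.norm_real,
    Real.norm_of_nonneg (lsinh_nonneg l)]
  gcongr
  · exact pow_nonneg (lsinh_nonneg l) n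
  · refine norm_cexp_neg_mul_ofReal_le (by positivity) ?_
    simpa only [Complex.ofReal_re] using le_re_gaveauBase hc.le t l

lemma four_rpow_nat_add_half (n : ℕ) : (4 : ℝ) ^ ((n : ℝ) + 1 / 2) = 2 * 4 ^ n := by
  rw [Real.rpow_add four_pos, Real.rpow_natCast, show (4 : ℝ) = 2 ^ (2 : ℝ) by norm_num,
    ← Real.rpow_mul two_pos.le]
  norm_num
  ring

theorem stmt8 (n : ℕ) (hn : 1 ≤ n) (z : Fin n → ℂ) (t : ℝ) (hz : z ≠ 0) :
    IntegrableOn (fun h : ℝ => ((h ^ (-(1 : ℝ) / 2) : ℝ) : ℂ) * pheat n h z t)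
      (Set.Ioi 0) volume ∧
    Integrable (fun l : ℝ => ((lsinh l : ℝ) : ℂ) ^ n *
      (((cnorm2 z * lcoth l : ℝ) : ℂ) - Complex.I * l * t) ^ (-(n : ℂ) - 1 / 2)) volume ∧
    ∫ h in Set.Ioi (0 : ℝ), ((h ^ (-(1 : ℝ) / 2) : ℝ) : ℂ) * pheat n h z t =
      (Complex.Gamma ((n : ℂ) + 1 / 2) / (4 * (Real.pi : ℂ) ^ (n + 1))) *
        ∫ l : ℝ, ((lsinh l : ℝ) : ℂ) ^ n *
          (((cnorm2 z * lcoth l : ℝ) : ℂ) - Complex.I * l * t) ^ (-(n : ℂ) - 1 / 2) := by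
  have hF := integrable_gaveauIntegrand (Nat.one_le_iff_ne_zero.1 hn) (cnorm2_pos hz) t
  have hpheat : EqOn (fun h : ℝ => ((h ^ (-(1 : ℝ) / 2) : ℝ) : ℂ) * pheat n h z t)
      (fun h => (((2 * (4 * Real.pi) ^ (n + 1))⁻¹ : ℝ) : ℂ) *
        ∫ l, gaveauIntegrand n (cnorm2 z) t h l) (Ioi 0) :=
    fun h hh => rpow_neg_half_mul_pheat n z t hh
  have hintegral_h := funext (integral_Ioi_gaveauIntegrand n (cnorm2_pos hz) t)
  have hΓ : (((4 : ℝ) ^ ((n : ℝ) + 1 / 2) : ℝ) : ℂ) * Complex.Gamma ((n : ℂ) + 1 / 2) ≠ 0 :=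
    mul_ne_zero (Complex.ofReal_ne_zero.2 (by positivity))
      (Complex.Gamma_ne_zero_of_re_pos (by simp; positivity))
  have hint_h : IntegrableOn (fun h => ∫ l, gaveauIntegrand n (cnorm2 z) t h l) (Ioi 0) :=
    hF.integral_prod_left
  have hint_l : Integrable (fun l => ∫ h in Ioi 0, gaveauIntegrand n (cnorm2 z) t h l) :=
    hF.integral_prod_right
  rw [hintegral_h, integrable_const_mul_iff (IsUnit.mk0 _ hΓ)] at hint_l
  refine ⟨IntegrableOn.congr_fun (hint_h.const_mul _) hpheat.symm measurableSet_Ioi,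
    hint_l, ?_⟩
  rw [setIntegral_congr_fun measurableSet_Ioi hpheat, integral_const_mul,
    integral_integral_swap hF, hintegral_h, integral_const_mul, ← mul_assoc, four_rpow_nat_add_half]
  congr 1
  push_cast
  field_simp
  ring
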